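/- For fixed r ≥ 1 and fixed k ≥ 1, the fraction of nodes of the congruence network G(r,N) whose out-degree equals k, i.e. (1/(N−r)) · #{m : r < m ≤ N, out-degree of m equals k}, converges to 1/(k(k+1)) as N → ∞. -/

import Mathlib

/-!
The out-degree of `m` in `G(r, N)` is `(N - r) / m`: its out-neighbours are `q * m + r`
for `1 ≤ q ≤ (N - r) / m`. Writing `M = N - r`, the nodes with `M / m = k` form the interval
`(M / (k + 1), M / k]` once `N` is large, and `(M / k - M / (k + 1)) / M → 1 / k - 1 / (k + 1)`.
-/

open Filter Finset Topology

namespace Nat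

lemma filter_Ioc_mod_eq_eq_image {r m N : ℕ} (hr : 0 < r) (hrm : r < m) :
    {j ∈ Ioc m N | j % m = r} = (Icc 1 ((N - r) / m)).image (· * m + r) := by
  have hm : 0 < m := hr.trans hrm
  ext j
  simp only [mem_filter, mem_Ioc, mem_image, mem_Icc, le_div_iff_mul_le hm]
  constructor
  · rintro ⟨⟨hmj, hjN⟩, hjr⟩
    have hj : j / m * m + r = j := by rw [← hjr, Nat.mul_comm]; exact div_add_mod j m
    refine ⟨j / m, ⟨?_, by omega⟩, hj⟩
    by_contra! h0
    rw [Nat.lt_one_iff.mp h0] at hj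
    omega
  · rintro ⟨q, ⟨hq, hqN⟩, rfl⟩
    have : m ≤ q * m := Nat.le_mul_of_pos_left m hq
    refine ⟨⟨by omega, by omega⟩, ?_⟩
    rw [Nat.add_comm, add_mul_mod_self_right, mod_eq_of_lt hrm]

lemma card_filter_Ioc_mod_eq {r m N : ℕ} (hr : 0 < r) (hrm : r < m) :
    #{j ∈ Ioc m N | j % m = r} = (N - r) / m := by
  have hinj : Function.Injective (· * m + r) := fun a b h ↦
    Nat.eq_of_mul_eq_mul_right (hr.trans hrm) (Nat.add_right_cancel h)
  rw [filter_Ioc_mod_eq_eq_image hr hrm, Finset.card_image_of_injective _ hinj, card_Icc,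
    Nat.add_sub_cancel]

lemma div_eq_iff_mem_Ioc {M m k : ℕ} (hm : 0 < m) (hk : 0 < k) :
    M / m = k ↔ m ∈ Ioc (M / (k + 1)) (M / k) := by
  rw [mem_Ioc, div_lt_iff_lt_mul k.succ_pos, le_div_iff_mul_le hk, le_antisymm_iff,
    le_div_iff_mul_le hm, ← Nat.lt_succ_iff, div_lt_iff_lt_mul hm, Nat.mul_comm m, Nat.mul_comm m,
    and_comm]

lemma filter_Ioc_div_eq {M a b k : ℕ} (hk : 0 < k) (ha : a ≤ M / (k + 1)) (hb : M / k ≤ b) :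
    {m ∈ Ioc a b | M / m = k} = Ioc (M / (k + 1)) (M / k) := by
  ext m
  rw [mem_filter]
  constructor
  · rintro ⟨hm, hmk⟩
    exact (div_eq_iff_mem_Ioc ((zero_le a).trans_lt (mem_Ioc.mp hm).1) hk).mp hmk
  · intro hm
    have ⟨hlo, hhi⟩ := mem_Ioc.mp hm
    exact ⟨mem_Ioc.mpr ⟨by omega, by omega⟩, (div_eq_iff_mem_Ioc (by omega) hk).mpr hm⟩

end Nat

lemma tendsto_natDiv_div_atTop (c : ℕ) :
    Tendsto (fun M : ℕ ↦ ((M / c : ℕ) : ℝ) / M) atTop (𝓝 (1 / c)) := by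
  refine ((tendsto_nat_floor_mul_div_atTop (R := ℝ) (by positivity : (0 : ℝ) ≤ 1 / c)).comp
    tendsto_natCast_atTop_atTop).congr fun M ↦ ?_
  rw [Function.comp_apply, one_div, inv_mul_eq_div, Nat.floor_div_natCast, Nat.floor_natCast]

lemma tendsto_natDiv_sub_natDiv_succ_div_atTop {k : ℕ} (hk : 0 < k) :
    Tendsto (fun M : ℕ ↦ ((M / k - M / (k + 1) : ℕ) : ℝ) / M) atTop
      (𝓝 (1 / ((k : ℝ) * (k + 1)))) := by
  have hlim := (tendsto_natDiv_div_atTop k).sub (tendsto_natDiv_div_atTop (k + 1))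
  have hval : 1 / (k : ℝ) - 1 / ((k + 1 : ℕ) : ℝ) = 1 / ((k : ℝ) * (k + 1)) := by
    push_cast
    field_simp
    ring
  rw [hval] at hlim
  refine hlim.congr fun M ↦ ?_
  rw [Nat.cast_sub (Nat.div_le_div_left k.le_succ hk), sub_div]

/-- For fixed `r ≥ 1` and `k ≥ 1`, the fraction of nodes of the congruence network
`G(r,N)` with out-degree `k` converges to `1/(k(k+1))` as `N → ∞`. -/
theorem congruence_network_degree_distribution (r k : ℕ) (hr : 1 ≤ r) (hk : 1 ≤ k) :
    Tendsto
      (fun N : ℕ =>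
        (((Finset.Ioc r N).filter
            (fun m => ((Finset.Ioc m N).filter (fun j => j % m = r)).card = k)).card : ℝ)
          / ((N : ℝ) - r))
      atTop (nhds (1 / ((k : ℝ) * (k + 1)))) := by
  refine ((tendsto_natDiv_sub_natDiv_succ_div_atTop hk).comp
    (tendsto_sub_atTop_nat r)).congr' ?_
  filter_upwards [eventually_ge_atTop (r * (k + 2))] with N hN
  have hrN : r * (k + 1) ≤ N - r := by rw [Nat.le_sub_iff_add_le (by nlinarith)]; linarith
  have hnodes : {m ∈ Ioc r N | #{j ∈ Ioc m N | j % m = r} = k}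
      = {m ∈ Ioc r N | (N - r) / m = k} :=
    filter_congr fun m hm ↦ by rw [Nat.card_filter_Ioc_mod_eq hr (mem_Ioc.mp hm).1]
  have hinterval : {m ∈ Ioc r N | (N - r) / m = k} = Ioc ((N - r) / (k + 1)) ((N - r) / k) :=
    Nat.filter_Ioc_div_eq hk ((Nat.le_div_iff_mul_le k.succ_pos).mpr hrN)
      ((Nat.div_le_self _ _).trans (N.sub_le r))
  rw [Function.comp_apply, hnodes, hinterval, Nat.card_Ioc, Nat.cast_sub (by nlinarith : r ≤ N)]
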